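/- arXiv:2012.06673 — 2 statements merged into one kernel-verified Lean document; each statement's English description precedes it below -/
import Mathlib

section
/- Let (M_j, Q_j)_{j≥1} be i.i.d. pairs with M_j > 0, A_n = M₁⋯M_n, and let Y_∞ = Σ_{n≥0} A_n Q_{n+1} converge absolutely a.s. Fix n ≥ 1 and suppose Q₁ and Y_n/A_n are both unbounded from above (each exceeds any level with positive probability). Then Y_∞ is unbounded from above. -/
open MeasureTheory ProbabilityTheory

/-!
Split the series after its first `n + 1` terms:
`Y_∞ = Q₁ + M₁ A' (Y'_n / A' + Y_{n+1,∞})`, where `A'` and `Y'_n` are built from the pairs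
`2, …, n + 1`. The three quantities `Q₁`, `Y'_n / A'` and `Y_{n+1,∞}` depend on disjoint blocks
of the i.i.d. sequence, so they are independent. The tail is a finite random variable, hence
exceeds some `c` with positive probability; `Y'_n / A'` has the law of `Y_n / A_n`, hence exceeds
`-c` with positive probability; and `Q₁` exceeds any `N` with positive probability. On the
intersection of these three events `Y_∞ > N`.
-/

section Independence

variable {Ω ι β : Type*} {mΩ : MeasurableSpace Ω} {mβ : MeasurableSpace β} {P : Measure Ω}
  {X : ι → Ω → β}

lemma measurable_iSup_comap_of_mem {S : Set ι} {j : ι} (hj : j ∈ S) :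
    Measurable[⨆ i ∈ S, mβ.comap (X i)] (X j) :=
  Measurable.of_comap_le (le_iSup₂ (f := fun i _ => mβ.comap (X i)) j hj)

lemma measurable_pi_iSup_comap {κ : Type*} {S : Set ι} {f : κ → ι} (hf : ∀ k, f k ∈ S) :
    Measurable[⨆ i ∈ S, mβ.comap (X i)] (fun ω k => X (f k) ω) :=
  letI := ⨆ i ∈ S, mβ.comap (X i)
  measurable_pi_lambda _ fun k => measurable_iSup_comap_of_mem (hf k)

lemma measure_inter_pos_of_iIndepFun (hX : ∀ i, Measurable (X i)) (h : iIndepFun X P)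
    {S T : Set ι} (hST : Disjoint S T) {E F : Set Ω}
    (hE : MeasurableSet[⨆ i ∈ S, mβ.comap (X i)] E)
    (hF : MeasurableSet[⨆ i ∈ T, mβ.comap (X i)] F) (hE₀ : 0 < P E) (hF₀ : 0 < P F) :
    0 < P (E ∩ F) := by
  rw [(Indep_iff _ _ _).mp (indep_iSup_of_disjoint (fun i => (hX i).comap_le) h.iIndep hST)
    E F hE hF]
  exact ENNReal.mul_pos hE₀.ne' hF₀.ne'

lemma map_shift_eq_map_of_iIndepFun {X : ℕ → Ω → β} (hX : ∀ i, Measurable (X i))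
    (h : iIndepFun X P) (hident : ∀ i, P.map (X i) = P.map (X 0)) (p : ℕ) :
    P.map (fun ω i => X (p + i) ω) = P.map (fun ω i => X i ω) := by
  rw [(h.precomp (add_right_injective p)).map_fun_eq_infinitePi_map (fun i => hX _),
    h.map_fun_eq_infinitePi_map hX]
  simp only [hident]

lemma measure_preimage_shift_eq {X : ℕ → Ω → β} (hX : ∀ i, Measurable (X i))
    (h : iIndepFun X P) (hident : ∀ i, P.map (X i) = P.map (X 0)) (p : ℕ)
    {s : Set (ℕ → β)} (hs : MeasurableSet s) :
    P ((fun ω i => X (p + i) ω) ⁻¹' s) = P ((fun ω i => X i ω) ⁻¹' s) := by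
  rw [← Measure.map_apply (measurable_pi_lambda _ fun i => hX _) hs,
    map_shift_eq_map_of_iIndepFun hX h hident, Measure.map_apply (measurable_pi_lambda _ hX) hs]

end Independence

lemma exists_measure_lt_pos {Ω : Type*} {mΩ : MeasurableSpace Ω} (P : Measure Ω) [NeZero P]
    (f : Ω → ℝ) : ∃ c : ℝ, 0 < P {ω | c < f ω} := by
  have hcover : (⋃ k : ℕ, {ω | -(k : ℝ) < f ω}) = Set.univ :=
    Set.eq_univ_of_forall fun ω => Set.mem_iUnion.mpr
      ((exists_nat_gt (-f ω)).imp fun k hk => by simp only [Set.mem_ofPred_eq]; linarith)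
  obtain ⟨k, hk⟩ := exists_measure_pos_of_not_measure_iUnion_null
    (by rw [hcover]; exact NeZero.ne (P Set.univ))
  exact ⟨_, hk⟩

namespace Perpetuity

/- With `z i = (M_{i+1}, Q_{i+1})`, `A n z`, `Y n z` and `Yinf z` are the `A_n`, `Y_n` and `Y_∞`
of the statement, and `Yinf (fun i => z (n + i))` is `Y_{n,∞}`. -/

variable {z : ℕ → ℝ × ℝ}

def A (n : ℕ) (z : ℕ → ℝ × ℝ) : ℝ := ∏ i ∈ Finset.range n, (z i).1

def Y (n : ℕ) (z : ℕ → ℝ × ℝ) : ℝ := ∑ k ∈ Finset.range n, A k z * (z k).2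

noncomputable def Yinf (z : ℕ → ℝ × ℝ) : ℝ := ∑' k, A k z * (z k).2

@[fun_prop]
lemma measurable_A (n : ℕ) : Measurable (A n) := by
  unfold A; fun_prop

@[fun_prop]
lemma measurable_Y (n : ℕ) : Measurable (Y n) := by
  unfold Y; fun_prop

lemma measurable_Yinf : Measurable Yinf :=
  Measurable.tsum fun k => by fun_prop

lemma measurable_Y_div_A_iSup_comap {Ω : Type*} {X : ℕ → Ω → ℝ × ℝ} {S : Set ℕ} {p n : ℕ}
    (hS : ∀ i < n, p + i ∈ S) :
    Measurable[⨆ i ∈ S, MeasurableSpace.comap (X i) inferInstance]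
      (fun ω => Y n (fun i => X (p + i) ω) / A n (fun i => X (p + i) ω)) := by
  have hX : ∀ i < n,
      Measurable[⨆ i ∈ S, MeasurableSpace.comap (X i) inferInstance] (X (p + i)) :=
    fun i hi => measurable_iSup_comap_of_mem (hS i hi)
  have hA : ∀ k ≤ n, Measurable[⨆ i ∈ S, MeasurableSpace.comap (X i) inferInstance]
      (fun ω => A k (fun i => X (p + i) ω)) := fun k hk =>
    Finset.measurable_prod _ fun i hi => (hX i ((Finset.mem_range.mp hi).trans_le hk)).fst
  exact (Finset.measurable_sum _ fun k hk =>
    (hA k (Finset.mem_range.mp hk).le).mul (hX k (Finset.mem_range.mp hk)).snd).div (hA n le_rfl)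

lemma A_pos (hz : ∀ i, 0 < (z i).1) (n : ℕ) : 0 < A n z :=
  Finset.prod_pos fun i _ => hz i

lemma A_zero : A 0 z = 1 := Finset.prod_range_zero _

lemma A_succ (n : ℕ) : A (n + 1) z = (z 0).1 * A n (fun i => z (1 + i)) := by
  simp only [A, Finset.prod_range_succ', add_comm 1]
  ring

lemma Y_succ (n : ℕ) : Y (n + 1) z = (z 0).2 + (z 0).1 * Y n (fun i => z (1 + i)) := by
  rw [Y, Finset.sum_range_succ', A_zero, Y, Finset.mul_sum]
  simp only [A_succ, mul_assoc, one_mul, add_comm]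

lemma Yinf_eq_Y_add_A_mul_Yinf_shift (hz : Summable fun k => A k z * (z k).2) (n : ℕ) :
    Yinf z = Y n z + A n z * Yinf (fun i => z (n + i)) := by
  rw [Yinf, ← hz.sum_add_tsum_nat_add n, Yinf, ← tsum_mul_left]
  congr 1
  refine tsum_congr fun k => ?_
  simp only [A, add_comm k n, Finset.prod_range_add]
  ring

lemma lt_Yinf (hz : Summable fun k => A k z * (z k).2) (hpos : ∀ i, 0 < (z i).1)
    {N c : ℝ} (n : ℕ) (h₀ : N < (z 0).2)
    (h₁ : -c < Y n (fun i => z (1 + i)) / A n (fun i => z (1 + i)))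
    (h₂ : c < Yinf (fun i => z (n + 1 + i))) : N < Yinf z := by
  have hA := A_pos (fun i => hpos (1 + i)) n
  have hrest : 0 < Y n (fun i => z (1 + i))
      + A n (fun i => z (1 + i)) * Yinf (fun i => z (n + 1 + i)) := by
    have := (lt_div_iff₀ hA).mp h₁
    nlinarith
  rw [Yinf_eq_Y_add_A_mul_Yinf_shift hz (n + 1), Y_succ, A_succ]
  nlinarith [hpos 0]

section Blocks

variable {Ω : Type*} {mΩ : MeasurableSpace Ω} {P : Measure Ω} {X : ℕ → Ω → ℝ × ℝ}

lemma measurableSet_block (n : ℕ) (c : ℝ) :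
    MeasurableSet[⨆ i ∈ Set.Ioc 0 n, MeasurableSpace.comap (X i) inferInstance]
      {ω | c < Y n (fun i => X (1 + i) ω) / A n (fun i => X (1 + i) ω)} :=
  measurableSet_lt measurable_const
    (measurable_Y_div_A_iSup_comap fun i hi => Set.mem_Ioc.mpr ⟨by omega, by omega⟩)

lemma measurableSet_tail (n : ℕ) (c : ℝ) :
    MeasurableSet[⨆ i ∈ Set.Ioi n, MeasurableSpace.comap (X i) inferInstance]
      {ω | c < Yinf fun i => X (n + 1 + i) ω} :=
  measurableSet_lt measurable_const
    (measurable_Yinf.comp (measurable_pi_iSup_comap fun i => Set.mem_Ioi.mpr (by omega)))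

lemma measurableSet_block_inter_tail (n : ℕ) (c : ℝ) :
    MeasurableSet[⨆ i ∈ Set.Ioi 0, MeasurableSpace.comap (X i) inferInstance]
      ({ω | -c < Y n (fun i => X (1 + i) ω) / A n (fun i => X (1 + i) ω)}
        ∩ {ω | c < Yinf fun i => X (n + 1 + i) ω}) := by
  have hmono : ∀ {S : Set ℕ}, S ⊆ Set.Ioi 0 → ⨆ i ∈ S, MeasurableSpace.comap (X i) inferInstance
      ≤ ⨆ i ∈ Set.Ioi 0, MeasurableSpace.comap (X i) inferInstance := fun hS => biSup_mono hS
  exact (hmono (fun i hi => hi.1) _ (measurableSet_block n (-c))).inter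
    (hmono (fun i (hi : n < i) => (Nat.zero_le n).trans_lt hi) _ (measurableSet_tail n c))

lemma exists_measure_block_inter_tail_pos [IsProbabilityMeasure P] (hX : ∀ i, Measurable (X i))
    (h : iIndepFun X P) (hident : ∀ i, P.map (X i) = P.map (X 0)) (n : ℕ)
    (hYA : ∀ N : ℝ, 0 < P {ω | N < Y n (fun i => X i ω) / A n (fun i => X i ω)}) :
    ∃ c : ℝ, 0 < P ({ω | -c < Y n (fun i => X (1 + i) ω) / A n (fun i => X (1 + i) ω)}
      ∩ {ω | c < Yinf fun i => X (n + 1 + i) ω}) := by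
  obtain ⟨c, htail⟩ := exists_measure_lt_pos P fun ω => Yinf fun i => X (n + 1 + i) ω
  have hblock : 0 < P {ω | -c < Y n (fun i => X (1 + i) ω) / A n (fun i => X (1 + i) ω)} := by
    have hs : MeasurableSet {z | -c < Y n z / A n z} :=
      measurableSet_lt (by fun_prop) (by fun_prop)
    calc 0 < P ((fun ω i => X i ω) ⁻¹' {z | -c < Y n z / A n z}) := hYA (-c)
      _ = _ := (measure_preimage_shift_eq hX h hident 1 hs).symm
  exact ⟨c, measure_inter_pos_of_iIndepFun hX h (Set.Ioc_disjoint_Ioi le_rfl)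
    (measurableSet_block n (-c)) (measurableSet_tail n c) hblock htail⟩

end Blocks

end Perpetuity

theorem stmt8_general {Ω : Type*} [MeasurableSpace Ω] (P : Measure Ω) [IsProbabilityMeasure P]
    (M Q : ℕ → Ω → ℝ)
    (hmeas : ∀ j, Measurable (fun ω => (M j ω, Q j ω)))
    (hindep : iIndepFun (fun j ω => (M j ω, Q j ω)) P)
    (hident : ∀ j, P.map (fun ω => (M j ω, Q j ω)) = P.map (fun ω => (M 0 ω, Q 0 ω)))
    (hMpos : ∀ j ω, 0 < M j ω)
    (hsum : ∀ᵐ ω ∂P, Summable (fun n => |(∏ i ∈ Finset.range n, M i ω) * Q n ω|))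
    (n : ℕ)
    (hQ1 : ∀ N : ℝ, 0 < P {ω | N < Q 0 ω})
    (hYA : ∀ N : ℝ, 0 < P {ω | N <
      (∑ j ∈ Finset.range n, (∏ i ∈ Finset.range j, M i ω) * Q j ω) /
        ∏ i ∈ Finset.range n, M i ω}) :
    ∀ N : ℝ, 0 < P {ω | N < ∑' k : ℕ, (∏ i ∈ Finset.range k, M i ω) * Q k ω} := by
  intro N
  let X : ℕ → Ω → ℝ × ℝ := fun j ω => (M j ω, Q j ω)
  obtain ⟨c, hc⟩ :=
    Perpetuity.exists_measure_block_inter_tail_pos (X := X) hmeas hindep hident n hYA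
  have hQ0 : MeasurableSet[⨆ i ∈ ({0} : Set ℕ), MeasurableSpace.comap (X i) inferInstance]
      {ω | N < Q 0 ω} :=
    measurableSet_lt measurable_const
      (measurable_iSup_comap_of_mem (X := X) (Set.mem_singleton 0)).snd
  have hpos := measure_inter_pos_of_iIndepFun hmeas hindep
    (Set.disjoint_singleton_left.mpr (lt_irrefl 0)) hQ0
    (Perpetuity.measurableSet_block_inter_tail n c) (hQ1 N) hc
  refine hpos.trans_le (measure_mono_ae ?_)
  filter_upwards [hsum] with ω hω ⟨h₀, h₁, h₂⟩
  exact Perpetuity.lt_Yinf (z := fun i => X i ω) hω.of_abs (fun i => hMpos i ω) n h₀ h₁ h₂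

/-- With `(M_j, Q_j)` i.i.d., `M_j > 0`, `A_n = M₁⋯M_n`, `Y_n = Σ_{j=1}^n A_{j-1} Q_j`,
and `Y_∞ = Σ_{n≥0} A_n Q_{n+1}` a.s. absolutely convergent: if `Q₁` and `Y_n / A_n` are
unbounded from above for some fixed `n ≥ 1`, then `Y_∞` is unbounded from above.
(Pairs are indexed from `0`.) -/
theorem stmt8 {Ω : Type*} [MeasurableSpace Ω] (P : Measure Ω) [IsProbabilityMeasure P]
    (M Q : ℕ → Ω → ℝ)
    (hmeas : ∀ j, Measurable (fun ω => (M j ω, Q j ω)))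
    (hindep : iIndepFun (fun j ω => (M j ω, Q j ω)) P)
    (hident : ∀ j, P.map (fun ω => (M j ω, Q j ω)) = P.map (fun ω => (M 0 ω, Q 0 ω)))
    (hMpos : ∀ j ω, 0 < M j ω)
    (hsum : ∀ᵐ ω ∂P, Summable (fun n => |(∏ i ∈ Finset.range n, M i ω) * Q n ω|))
    (n : ℕ) (hn : 1 ≤ n)
    (hQ1 : ∀ N : ℝ, 0 < P {ω | N < Q 0 ω})
    (hYA : ∀ N : ℝ, 0 < P {ω | N <
      (∑ j ∈ Finset.range n, (∏ i ∈ Finset.range j, M i ω) * Q j ω) /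
        ∏ i ∈ Finset.range n, M i ω}) :
    ∀ N : ℝ, 0 < P {ω | N < ∑' k : ℕ, (∏ i ∈ Finset.range k, M i ω) * Q k ω} :=
  stmt8_general P M Q hmeas hindep hident hMpos hsum n hQ1 hYA
end

section
/- Let W be a standard Brownian motion, σ ≠ 0, K > 0, and t > s > 0. Then the random variable ζ̃ := K e^{σ(W_t − W_s)} − e^{σW_t} ∫₀^t e^{σW_r} dr is unbounded from above. -/
/-!
Suppose `ζ̃ ≤ N` almost surely. On the event `A = {N + 1 < K e^{σ(W_t - W_s)}}`, which has
positive probability, this forces `1 ≤ e^{σ W_t} ∫₀ᵗ e^{σ W_r} dr`. Weight both sides by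
`e^{-θσ W_s}`: `A` depends only on the increment `W_t - W_s` and so is independent of the weight,
while the expectation of the right-hand side is computed by Fubini and the Gaussian moment
formula for `(W_r, W_s, W_t)`. The weight favours paths with `σ W_s ≪ 0`, on which the
exponential functional is small, and comparing the two sides gives
`P(A) ≤ t e^{2σ²t} e^{-θσ²s}` for every `θ ≥ 2`. Letting `θ → ∞` yields `P(A) = 0`.
-/

open MeasureTheory ProbabilityTheory Real Filter Topology
open scoped ENNReal NNReal

lemma lintegral_ofReal_exp_mul_gaussianReal (μ : ℝ) (v : ℝ≥0) (c : ℝ) :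
    ∫⁻ x, ENNReal.ofReal (exp (c * x)) ∂gaussianReal μ v
      = ENNReal.ofReal (exp (μ * c + v * c ^ 2 / 2)) := by
  rw [← ofReal_integral_eq_lintegral_ofReal (integrable_exp_mul_gaussianReal c)
    (ae_of_all _ fun _ => (exp_pos _).le)]
  exact congrArg ENNReal.ofReal (congrFun mgf_fun_id_gaussianReal c)

lemma ofReal_intervalIntegral_eq_setLIntegral {f : ℝ → ℝ} (hf : Continuous f)
    (hf0 : ∀ x, 0 ≤ f x) {a b : ℝ} (hab : a ≤ b) :
    ENNReal.ofReal (∫ x in a..b, f x) = ∫⁻ x in Set.Ioc a b, ENNReal.ofReal (f x) := by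
  rw [intervalIntegral.integral_of_le hab]
  exact ofReal_integral_eq_lintegral_ofReal hf.integrableOn_Ioc (ae_of_all _ hf0)

section Increments

variable {Ω : Type*} {W : ℝ → Ω → ℝ}

abbrev pastSigmaAlgebra (W : ℝ → Ω → ℝ) (u : ℝ) : MeasurableSpace Ω :=
  ⨆ r : Set.Icc (0 : ℝ) u, MeasurableSpace.comap (W r) inferInstance

lemma measurable_pastSigmaAlgebra {r u : ℝ} (hr : 0 ≤ r) (hru : r ≤ u) :
    Measurable[pastSigmaAlgebra W u] (W r) :=
  measurable_iff_comap_le.2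
    (le_iSup (fun r : Set.Icc (0 : ℝ) u => MeasurableSpace.comap (W r) inferInstance) ⟨r, hr, hru⟩)

variable [MeasurableSpace Ω] {P : Measure Ω}

structure HasIndepGaussianIncrements (P : Measure Ω) (W : ℝ → Ω → ℝ) : Prop where
  measurable : ∀ t, Measurable (W t)
  zero : ∀ ω, W 0 ω = 0
  map_sub : ∀ s t : ℝ, 0 ≤ s → s ≤ t →
    P.map (fun ω => W t ω - W s ω) = gaussianReal 0 (t - s).toNNReal
  indep_sub : ∀ s t : ℝ, 0 ≤ s → s ≤ t →
    Indep (MeasurableSpace.comap (fun ω => W t ω - W s ω) inferInstance) (pastSigmaAlgebra W s) P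

namespace HasIndepGaussianIncrements

lemma pastSigmaAlgebra_le (hW : HasIndepGaussianIncrements P W) (u : ℝ) :
    pastSigmaAlgebra W u ≤ ‹MeasurableSpace Ω› :=
  iSup_le fun r => (hW.measurable r).comap_le

lemma measurable_sub (hW : HasIndepGaussianIncrements P W) (u v : ℝ) :
    Measurable fun ω => W v ω - W u ω :=
  (hW.measurable v).sub (hW.measurable u)

lemma measure_preimage_sub_pos (hW : HasIndepGaussianIncrements P W) {u v : ℝ} (hu : 0 ≤ u)
    (huv : u < v) {U : Set ℝ} (hU : IsOpen U) (hne : U.Nonempty) :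
    0 < P ((fun ω => W v ω - W u ω) ⁻¹' U) := by
  rw [← Measure.map_apply (hW.measurable_sub u v) hU.measurableSet, hW.map_sub u v hu huv.le]
  have hvar : (v - u).toNNReal ≠ 0 := by simpa using huv
  exact pos_iff_ne_zero.2 fun h =>
    hU.measure_ne_zero volume hne (gaussianReal_absolutelyContinuous' 0 hvar h)

lemma lintegral_exp_mul_sub (hW : HasIndepGaussianIncrements P W) {u v : ℝ} (hu : 0 ≤ u)
    (huv : u ≤ v) (c : ℝ) :
    ∫⁻ ω, ENNReal.ofReal (exp (c * (W v ω - W u ω))) ∂P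
      = ENNReal.ofReal (exp (c ^ 2 * (v - u) / 2)) := by
  rw [← lintegral_map (measurable_id'.const_mul c).exp.ennreal_ofReal
      (hW.measurable_sub u v), hW.map_sub u v hu huv, lintegral_ofReal_exp_mul_gaussianReal,
    Real.coe_toNNReal _ (sub_nonneg.2 huv)]
  ring_nf

lemma lintegral_exp_mul (hW : HasIndepGaussianIncrements P W) {u : ℝ} (hu : 0 ≤ u) (c : ℝ) :
    ∫⁻ ω, ENNReal.ofReal (exp (c * W u ω)) ∂P = ENNReal.ofReal (exp (c ^ 2 * u / 2)) := by
  simpa [hW.zero] using hW.lintegral_exp_mul_sub le_rfl hu c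

lemma lintegral_exp_mul_add (hW : HasIndepGaussianIncrements P W) {u v : ℝ} (hu : 0 ≤ u)
    (huv : u ≤ v) (c : ℝ) {h : Ω → ℝ} (hh : Measurable[pastSigmaAlgebra W u] h) :
    ∫⁻ ω, ENNReal.ofReal (exp (c * W v ω + h ω)) ∂P
      = ENNReal.ofReal (exp (c ^ 2 * (v - u) / 2))
        * ∫⁻ ω, ENNReal.ofReal (exp (c * W u ω + h ω)) ∂P := by
  have hsplit : ∀ ω, ENNReal.ofReal (exp (c * W v ω + h ω))
      = ENNReal.ofReal (exp (c * (W v ω - W u ω))) * ENNReal.ofReal (exp (c * W u ω + h ω)) := by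
    intro ω
    rw [← ENNReal.ofReal_mul (exp_pos _).le, ← exp_add]
    ring_nf
  simp_rw [hsplit]
  rw [lintegral_mul_eq_lintegral_mul_lintegral_of_independent_measurableSpace
    (hW.measurable_sub u v).comap_le (hW.pastSigmaAlgebra_le u) (hW.indep_sub u v hu huv)
    ((Measurable.of_comap_le le_rfl).const_mul c).exp.ennreal_ofReal
    (((measurable_pastSigmaAlgebra hu le_rfl).const_mul c).fun_add hh).exp.ennreal_ofReal,
    hW.lintegral_exp_mul_sub hu huv]

lemma lintegral_exp_three (hW : HasIndepGaussianIncrements P W) {u v w : ℝ} (hu : 0 ≤ u)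
    (huv : u ≤ v) (hvw : v ≤ w) (a b c : ℝ) :
    ∫⁻ ω, ENNReal.ofReal (exp (a * W w ω + (b * W v ω + c * W u ω))) ∂P
      = ENNReal.ofReal (exp (a ^ 2 * (w - v) / 2 + (a + b) ^ 2 * (v - u) / 2
          + (a + b + c) ^ 2 * u / 2)) := by
  have hv : 0 ≤ v := hu.trans huv
  calc _ = ENNReal.ofReal (exp (a ^ 2 * (w - v) / 2))
          * ∫⁻ ω, ENNReal.ofReal (exp (a * W v ω + (b * W v ω + c * W u ω))) ∂P :=
        hW.lintegral_exp_mul_add hv hvw a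
          (((measurable_pastSigmaAlgebra hv le_rfl).const_mul b).fun_add
            ((measurable_pastSigmaAlgebra hu huv).const_mul c))
    _ = ENNReal.ofReal (exp (a ^ 2 * (w - v) / 2))
          * ∫⁻ ω, ENNReal.ofReal (exp ((a + b) * W v ω + c * W u ω)) ∂P := by
        simp only [← add_assoc, ← add_mul]
    _ = ENNReal.ofReal (exp (a ^ 2 * (w - v) / 2))
          * (ENNReal.ofReal (exp ((a + b) ^ 2 * (v - u) / 2))
            * ∫⁻ ω, ENNReal.ofReal (exp ((a + b) * W u ω + c * W u ω)) ∂P) := by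
        rw [hW.lintegral_exp_mul_add hu huv (a + b)
          ((measurable_pastSigmaAlgebra hu le_rfl).const_mul c)]
    _ = _ := by
        simp only [← add_mul]
        rw [hW.lintegral_exp_mul hu, ← ENNReal.ofReal_mul (exp_pos _).le,
          ← ENNReal.ofReal_mul (exp_pos _).le, ← exp_add, ← exp_add]
        congr 2
        ring

lemma lintegral_exp_tilted_le (hW : HasIndepGaussianIncrements P W) {θ σ s t r : ℝ} (hθ : 2 ≤ θ)
    (hs : 0 ≤ s) (hst : s ≤ t) (hr : 0 ≤ r) (hrt : r ≤ t) :
    ∫⁻ ω, ENNReal.ofReal (exp (σ * W t ω + (-(θ * σ) * W s ω + σ * W r ω))) ∂P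
      ≤ ENNReal.ofReal (exp ((θ * σ) ^ 2 * s / 2 - θ * σ ^ 2 * s + 2 * σ ^ 2 * t)) := by
  rcases le_total r s with hrs | hsr
  · rw [hW.lintegral_exp_three hr hrs hst]
    refine ENNReal.ofReal_le_ofReal (exp_le_exp.2 ?_)
    nlinarith [mul_nonneg (sq_nonneg σ) (hs.trans hst), mul_nonneg (sq_nonneg σ)
      (mul_nonneg hr (by linarith : (0 : ℝ) ≤ 2 * θ - 3))]
  · simp only [add_comm (-(θ * σ) * W s _)]
    rw [hW.lintegral_exp_three hs hsr hrt]
    refine ENNReal.ofReal_le_ofReal (exp_le_exp.2 ?_)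
    nlinarith [mul_nonneg (sq_nonneg σ) (sub_nonneg.2 hrt), mul_nonneg (sq_nonneg σ)
      (mul_nonneg (by linarith : (0 : ℝ) ≤ θ) hs)]

lemma lintegral_exp_tilted_mul_lintegral_le (hW : HasIndepGaussianIncrements P W) [SFinite P]
    (hcont : ∀ ω, Continuous fun r => W r ω) {θ σ s t : ℝ} (hθ : 2 ≤ θ) (hs : 0 ≤ s)
    (hst : s ≤ t) :
    ∫⁻ ω, ENNReal.ofReal (exp (σ * W t ω + -(θ * σ) * W s ω))
        * (∫⁻ r in Set.Ioc 0 t, ENNReal.ofReal (exp (σ * W r ω))) ∂P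
      ≤ ENNReal.ofReal (t * exp ((θ * σ) ^ 2 * s / 2 - θ * σ ^ 2 * s + 2 * σ ^ 2 * t)) := by
  have hjoint : Measurable fun q : Ω × ℝ => W q.2 q.1 :=
    (measurable_uncurry_of_continuous_of_measurable hcont hW.measurable).comp measurable_swap
  have hmeas : Measurable fun q : Ω × ℝ =>
      ENNReal.ofReal (exp (σ * W t q.1 + (-(θ * σ) * W s q.1 + σ * W q.2 q.1))) :=
    ((((hW.measurable t).comp measurable_fst).const_mul σ).add
      ((((hW.measurable s).comp measurable_fst).const_mul _).add
        (hjoint.const_mul σ))).exp.ennreal_ofReal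
  calc _ = ∫⁻ ω, (∫⁻ r in Set.Ioc 0 t,
          ENNReal.ofReal (exp (σ * W t ω + (-(θ * σ) * W s ω + σ * W r ω)))) ∂P := by
        refine lintegral_congr fun ω => ?_
        rw [← lintegral_const_mul' _ _ ENNReal.ofReal_ne_top]
        refine lintegral_congr fun r => ?_
        rw [← ENNReal.ofReal_mul (exp_pos _).le, ← exp_add, add_assoc]
    _ = ∫⁻ r in Set.Ioc 0 t, ∫⁻ ω,
          ENNReal.ofReal (exp (σ * W t ω + (-(θ * σ) * W s ω + σ * W r ω))) ∂P :=
        lintegral_lintegral_swap hmeas.aemeasurable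
    _ ≤ ∫⁻ _ in Set.Ioc 0 t,
          ENNReal.ofReal (exp ((θ * σ) ^ 2 * s / 2 - θ * σ ^ 2 * s + 2 * σ ^ 2 * t)) :=
        setLIntegral_mono measurable_const fun r hr =>
          hW.lintegral_exp_tilted_le hθ hs hst hr.1.le hr.2
    _ = _ := by
        rw [setLIntegral_const, Real.volume_Ioc, sub_zero, mul_comm,
          ENNReal.ofReal_mul (hs.trans hst)]

lemma measure_preimage_sub_mul_exp_le (hW : HasIndepGaussianIncrements P W) [SFinite P]
    (hcont : ∀ ω, Continuous fun r => W r ω) {θ σ s t : ℝ} (hθ : 2 ≤ θ) (hs : 0 ≤ s)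
    (hst : s ≤ t) {S : Set ℝ} (hS : MeasurableSet S)
    (h : ∀ᵐ ω ∂P, W t ω - W s ω ∈ S → 1 ≤ exp (σ * W t ω) * ∫ r in 0..t, exp (σ * W r ω)) :
    P ((fun ω => W t ω - W s ω) ⁻¹' S) * ENNReal.ofReal (exp ((θ * σ) ^ 2 * s / 2))
      ≤ ENNReal.ofReal (t * exp ((θ * σ) ^ 2 * s / 2 - θ * σ ^ 2 * s + 2 * σ ^ 2 * t)) := by
  set A := (fun ω => W t ω - W s ω) ⁻¹' S
  have hweight : ∫⁻ ω, A.indicator 1 ω * ENNReal.ofReal (exp (-(θ * σ) * W s ω)) ∂P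
      = P A * ENNReal.ofReal (exp ((θ * σ) ^ 2 * s / 2)) := by
    rw [lintegral_mul_eq_lintegral_mul_lintegral_of_independent_measurableSpace
      (hW.measurable_sub s t).comap_le (hW.pastSigmaAlgebra_le s) (hW.indep_sub s t hs hst)
      (measurable_const.indicator (measurableSet_preimage (comap_measurable _) hS) :
        Measurable[MeasurableSpace.comap (fun ω => W t ω - W s ω) inferInstance] (A.indicator 1))
      ((measurable_pastSigmaAlgebra hs le_rfl).const_mul _).exp.ennreal_ofReal,
      lintegral_indicator_one (hW.measurable_sub s t hS), hW.lintegral_exp_mul hs, neg_sq]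
  have hpointwise : ∀ᵐ ω ∂P, A.indicator 1 ω * ENNReal.ofReal (exp (-(θ * σ) * W s ω))
      ≤ ENNReal.ofReal (exp (σ * W t ω + -(θ * σ) * W s ω))
        * ∫⁻ r in Set.Ioc 0 t, ENNReal.ofReal (exp (σ * W r ω)) := by
    filter_upwards [h] with ω hω
    by_cases hA : ω ∈ A
    · have hY := ENNReal.ofReal_le_ofReal (hω hA)
      rw [ENNReal.ofReal_one, ENNReal.ofReal_mul (exp_pos _).le,
        ofReal_intervalIntegral_eq_setLIntegral (by fun_prop) (fun _ => (exp_pos _).le)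
          (hs.trans hst)] at hY
      rw [Set.indicator_of_mem hA, Pi.one_apply, one_mul, exp_add,
        ENNReal.ofReal_mul (exp_pos _).le, mul_comm (ENNReal.ofReal (exp (σ * W t ω))), mul_assoc]
      exact le_mul_of_one_le_right' hY
    · simp [Set.indicator_of_notMem hA]
  calc _ = _ := hweight.symm
    _ ≤ _ := lintegral_mono_ae hpointwise
    _ ≤ _ := hW.lintegral_exp_tilted_mul_lintegral_le hcont hθ hs hst

lemma measure_preimage_sub_eq_zero (hW : HasIndepGaussianIncrements P W) [IsFiniteMeasure P]
    (hcont : ∀ ω, Continuous fun r => W r ω) {σ s t : ℝ} (hσ : σ ≠ 0) (hs : 0 < s)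
    (hst : s ≤ t) {S : Set ℝ} (hS : MeasurableSet S)
    (h : ∀ᵐ ω ∂P, W t ω - W s ω ∈ S → 1 ≤ exp (σ * W t ω) * ∫ r in 0..t, exp (σ * W r ω)) :
    P ((fun ω => W t ω - W s ω) ⁻¹' S) = 0 := by
  set A := (fun ω => W t ω - W s ω) ⁻¹' S
  have hrate : 0 < σ ^ 2 * s := by positivity
  have hbound : ∀ θ, 2 ≤ θ → (P A).toReal ≤ t * exp (2 * σ ^ 2 * t) * exp (-(σ ^ 2 * s * θ)) := by
    intro θ hθ
    have hX := hW.measure_preimage_sub_mul_exp_le hcont hθ hs.le hst hS h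
    rw [← ENNReal.ofReal_toReal (measure_ne_top P A), ← ENNReal.ofReal_mul ENNReal.toReal_nonneg,
      ENNReal.ofReal_le_ofReal_iff (mul_nonneg (hs.le.trans hst) (exp_pos _).le)] at hX
    have hsplit : t * exp (2 * σ ^ 2 * t) * exp (-(σ ^ 2 * s * θ)) * exp ((θ * σ) ^ 2 * s / 2)
        = t * exp ((θ * σ) ^ 2 * s / 2 - θ * σ ^ 2 * s + 2 * σ ^ 2 * t) := by
      rw [mul_assoc t, mul_assoc t, ← exp_add, ← exp_add]
      congr 2
      ring
    exact le_of_mul_le_mul_right (hX.trans_eq hsplit.symm) (exp_pos _)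
  have hlim : Tendsto (fun θ => t * exp (2 * σ ^ 2 * t) * exp (-(σ ^ 2 * s * θ))) atTop (𝓝 0) := by
    simpa using (tendsto_exp_neg_atTop_nhds_zero.comp
      (tendsto_id.const_mul_atTop hrate)).const_mul (t * exp (2 * σ ^ 2 * t))
  have hA : (P A).toReal ≤ 0 := ge_of_tendsto hlim ((eventually_ge_atTop 2).mono hbound)
  exact (ENNReal.toReal_eq_zero_iff _).1 (le_antisymm hA ENNReal.toReal_nonneg)
    |>.resolve_right (measure_ne_top P A)

end HasIndepGaussianIncrements

end Increments

/-- For a standard Brownian motion `W`, `σ ≠ 0`, `K > 0`, `t > s > 0`, the random variable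
`ζ̃ = K e^{σ(W_t - W_s)} - e^{σ W_t} ∫₀^t e^{σ W_r} dr` is unbounded from above. -/
theorem stmt10 {Ω : Type*} [MeasurableSpace Ω] (P : Measure Ω) [IsProbabilityMeasure P]
    (W : ℝ → Ω → ℝ) (hmeas : ∀ t, Measurable (W t))
    (hW0 : ∀ ω, W 0 ω = 0)
    (hcont : ∀ ω, Continuous (fun t => W t ω))
    (hgauss : ∀ s t : ℝ, 0 ≤ s → s ≤ t →
      P.map (fun ω => W t ω - W s ω) = gaussianReal 0 (Real.toNNReal (t - s)))
    (hindep : ∀ s t : ℝ, 0 ≤ s → s ≤ t →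
      Indep (MeasurableSpace.comap (fun ω => W t ω - W s ω) inferInstance)
        (⨆ r : Set.Icc (0 : ℝ) s, MeasurableSpace.comap (W r) inferInstance) P)
    (σ K s t : ℝ) (hσ : σ ≠ 0) (hK : 0 < K) (hs : 0 < s) (hst : s < t) :
    ∀ N : ℝ, 0 < P {ω |
      N < K * Real.exp (σ * (W t ω - W s ω)) -
        Real.exp (σ * W t ω) * ∫ r in (0 : ℝ)..t, Real.exp (σ * W r ω)} := by
  intro N
  have hW : HasIndepGaussianIncrements P W := ⟨hmeas, hW0, hgauss, hindep⟩
  set S := {x : ℝ | N + 1 < K * exp (σ * x)}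
  have hS : IsOpen S := isOpen_lt continuous_const (by fun_prop)
  have hSne : S.Nonempty := by
    refine ⟨(N + 1) / K / σ, ?_⟩
    simp only [S, Set.mem_ofPred_eq, mul_div_cancel₀ _ hσ]
    calc N + 1 < K * ((N + 1) / K + 1) := by field_simp; linarith
      _ ≤ K * exp ((N + 1) / K) := by gcongr; exact add_one_le_exp _
  refine pos_iff_ne_zero.2 fun hzero => (hW.measure_preimage_sub_pos hs.le hst hS hSne).ne'
    (hW.measure_preimage_sub_eq_zero hcont hσ hs hst.le hS.measurableSet ?_)
  filter_upwards [measure_eq_zero_iff_ae_notMem.1 hzero] with ω hω hωS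
  have hlarge : N + 1 < K * exp (σ * (W t ω - W s ω)) := hωS
  linarith [not_lt.1 hω]
end
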